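/- The ridge estimate shrinks toward zero: with Ψ̂(k) = (XᵀX + kI)⁻¹Xᵀy, the map k ↦ ‖Ψ̂(k)‖ is nonincreasing in k > 0, i.e. ‖(XᵀX + kI)⁻¹Xᵀy‖ ≤ ‖(XᵀX + k'I)⁻¹Xᵀy‖ whenever k ≥ k' > 0. -/

import Mathlib

open Matrix

/-- The norm of the ridge estimate is nonincreasing in the regularization
parameter k > 0. -/
theorem ridge_norm_antitone (N n : ℕ) (X : Matrix (Fin N) (Fin n) ℝ)
    (y : Fin N → ℝ) (k k' : ℝ) (hk' : 0 < k') (hkk' : k' ≤ k) :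
    let Ψhat := fun κ : ℝ =>
      (Xᵀ * X + κ • (1 : Matrix (Fin n) (Fin n) ℝ))⁻¹.mulVec (Xᵀ.mulVec y)
    Real.sqrt (∑ j, (Ψhat k j) ^ 2) ≤ Real.sqrt (∑ j, (Ψhat k' j) ^ 2) := by
  intro Ψhat
  have hk : 0 < k := lt_of_lt_of_le hk' hkk'
  have hApsd : (Xᵀ * X).PosSemidef := by
    simpa using posSemidef_conjTranspose_mul_self X
  have hpd : ∀ κ : ℝ, 0 < κ → (Xᵀ * X + κ • (1 : Matrix (Fin n) (Fin n) ℝ)).PosDef := by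
    intro κ hκ
    have h1 : (κ • (1 : Matrix (Fin n) (Fin n) ℝ)).PosDef := by
      rw [smul_one_eq_diagonal]
      exact Matrix.PosDef.diagonal fun _ => hκ
    exact Matrix.PosDef.posSemidef_add hApsd h1
  have hMk := hpd k hk
  have hMk' := hpd k' hk'
  set M : ℝ → Matrix (Fin n) (Fin n) ℝ :=
    fun κ => Xᵀ * X + κ • (1 : Matrix (Fin n) (Fin n) ℝ) with hM
  set b := Xᵀ.mulVec y with hb
  set u := (M k)⁻¹.mulVec b with hu
  set v := (M k')⁻¹.mulVec b with hv
  have hMu : (M k).mulVec u = b := by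
    rw [hu, mulVec_mulVec, Matrix.mul_nonsing_inv _ hMk.det_pos.ne'.isUnit, one_mulVec]
  have hMv : (M k').mulVec v = b := by
    rw [hv, mulVec_mulVec, Matrix.mul_nonsing_inv _ hMk'.det_pos.ne'.isUnit, one_mulVec]
  set w := (M k')⁻¹.mulVec u with hwdef
  have hw : (M k').mulVec w = u := by
    rw [hwdef, mulVec_mulVec, Matrix.mul_nonsing_inv _ hMk'.det_pos.ne'.isUnit, one_mulVec]
  have hveq : v = u + (k - k') • w := by
    have hinj : Function.Injective (M k').mulVec :=
      mulVec_injective_iff_isUnit.mpr hMk'.isUnit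
    apply hinj
    rw [hMv, mulVec_add, mulVec_smul, hw]
    have : (M k').mulVec u + (k - k') • u = (M k).mulVec u := by
      simp only [hM, add_mulVec, smul_mulVec, one_mulVec]
      module
    rw [this, hMu]
  have huw : 0 ≤ u ⬝ᵥ w := by
    have h0 := hMk'.posSemidef.dotProduct_mulVec_nonneg w
    rw [star_trivial] at h0
    rw [← hw, dotProduct_comm]
    exact h0
  have hww : 0 ≤ w ⬝ᵥ w := by
    apply Finset.sum_nonneg
    intro i _
    exact mul_self_nonneg _
  have hsum : ∑ j, (u j) ^ 2 ≤ ∑ j, (v j) ^ 2 := by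
    have h1 : ∀ z : Fin n → ℝ, ∑ j, (z j) ^ 2 = z ⬝ᵥ z := by
      intro z; simp [dotProduct, pow_two]
    rw [h1, h1, hveq]
    simp only [dotProduct_add, add_dotProduct, dotProduct_smul, smul_dotProduct,
      smul_eq_mul]
    have hcomm : w ⬝ᵥ u = u ⬝ᵥ w := dotProduct_comm _ _
    rw [hcomm]
    nlinarith [mul_nonneg (sub_nonneg.mpr hkk') huw, mul_nonneg (mul_nonneg (sub_nonneg.mpr hkk') (sub_nonneg.mpr hkk')) hww]
  exact Real.sqrt_le_sqrt hsum
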